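/- arXiv:1002.1468 — 7 statements merged into one kernel-verified Lean document; each statement's English description precedes it below -/
import Mathlib

section
/- Let H = ⊕_{i∈I} ⟨f_i⟩ be an internal direct sum of cyclic subgroups of an abelian group, let J be a nonempty subset of I, and let I' ⊆ I \ J be a subset such that for every i ∈ I' there is j(i) ∈ J with the order of f_{j(i)} equal to the order of f_i. Define f_i¹ = f_i − f_{j(i)} for i ∈ I' and f_i¹ = f_i otherwise. Then H = ⊕_{i∈I} ⟨f_i¹⟩, i.e., the family (f_i¹)_{i∈I} is independent and generates H. -/
/-!
Write a relation `∑ aᵢ • f¹ᵢ = 0` in terms of the `fᵢ`. Since `j` maps `I'` outside `I'`, for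
`l ∈ I'` the coefficient of `f_l` is still `a_l`, so `a_l • f_l = 0`; as `o(f_{j l}) ∣ o(f_l)`
also `a_l • f_{j l} = 0`, hence `a_l • f¹_l = 0`. Dropping these summands leaves a relation among
the `fᵢ = f¹ᵢ` with `i ∉ I'`. For generation, `fᵢ = f¹ᵢ + f¹_{j i}` on `I'`.
-/

def IndepFamily {G : Type} [AddCommGroup G] {I : Type} (f : I → G) : Prop :=
  ∀ a : I →₀ ℤ, (a.sum fun i n => n • f i) = 0 → ∀ i, a i • f i = 0

section

variable {G I : Type} [AddCommGroup G] {f g : I → G} {S : Set I} {j : I → I}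

theorem sum_filter_zsmul_congr (a : I →₀ ℤ) (p : I → Prop) [DecidablePred p]
    (h : ∀ i, p i → f i = g i) :
    ((a.filter p).sum fun i n => n • f i) = (a.filter p).sum fun i n => n • g i :=
  Finsupp.sum_congr fun i hi => by
    rw [h i (Finset.mem_filter.1 (Finsupp.support_filter (p := p) (f := a) ▸ hi)).2]

theorem sum_zsmul_eq_sum_zsmul_sub_mapDomain [DecidablePred (· ∈ S)]
    (hg : ∀ i ∈ S, g i = f i - f (j i)) (hg' : ∀ i ∉ S, g i = f i) (a : I →₀ ℤ) :
    (a.sum fun i n => n • g i) =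
      (a - (a.filter (· ∈ S)).mapDomain j).sum fun i n => n • f i := by
  rw [Finsupp.sum_sub_index (fun i m n => sub_smul m n (f i)),
    Finsupp.sum_mapDomain_index (h := fun i n => n • f i) (fun _ => zero_smul ℤ _)
      (fun i m n => add_smul m n (f i)),
    ← Finsupp.sum_filter_add_sum_filter_not (p := (· ∈ S)) a (fun i n => n • g i),
    ← Finsupp.sum_filter_add_sum_filter_not (p := (· ∈ S)) a (fun i n => n • f i),
    sum_filter_zsmul_congr a _ hg, sum_filter_zsmul_congr a _ hg']
  simp only [smul_sub, Finsupp.sum_sub]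
  abel

namespace IndepFamily

theorem zsmul_eq_zero_of_mem (hf : IndepFamily f) (hjS : Set.MapsTo j S Sᶜ)
    (hg : ∀ i ∈ S, g i = f i - f (j i)) (hg' : ∀ i ∉ S, g i = f i) {a : I →₀ ℤ}
    (ha : (a.sum fun i n => n • g i) = 0) {l : I} (hl : l ∈ S) : a l • f l = 0 := by
  classical
  have hc : (a.filter (· ∈ S)).mapDomain j l = 0 := Finsupp.notMem_support_iff.1 fun h => by
    obtain ⟨x, hx, rfl⟩ := Finset.mem_image.1 (Finsupp.mapDomain_support h)
    exact hjS (Finset.mem_filter.1 hx).2 hl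
  have := hf _ (sum_zsmul_eq_sum_zsmul_sub_mapDomain hg hg' a ▸ ha) l
  rwa [Finsupp.sub_apply, hc, sub_zero] at this

theorem zsmul_eq_zero_of_notMem (hf : IndepFamily f) (hg' : ∀ i ∉ S, g i = f i)
    {a : I →₀ ℤ} (ha : (a.sum fun i n => n • g i) = 0) (hS : ∀ i ∈ S, a i • g i = 0)
    {i : I} (hi : i ∉ S) : a i • g i = 0 := by
  classical
  have hS_sum : ((a.filter (· ∈ S)).sum fun i n => n • g i) = 0 := by
    rw [Finsupp.sum_filter_index]
    exact Finset.sum_eq_zero fun x hx => hS x (Finset.mem_filter.1 hx).2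
  have hcompl_sum : ((a.filter (· ∉ S)).sum fun i n => n • f i) = 0 := by
    rw [← sum_filter_zsmul_congr a _ hg', ← Finsupp.sum_sub_sum_filter, ha, hS_sum, sub_zero]
  have := hf _ hcompl_sum i
  rwa [Finsupp.filter_apply_pos (· ∉ S) a hi, ← hg' i hi] at this

theorem sub_of_mapsTo_compl (hf : IndepFamily f) (hjS : Set.MapsTo j S Sᶜ)
    (hord : ∀ i ∈ S, addOrderOf (f (j i)) ∣ addOrderOf (f i))
    (hg : ∀ i ∈ S, g i = f i - f (j i)) (hg' : ∀ i ∉ S, g i = f i) : IndepFamily g := by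
  intro a ha
  have hS : ∀ i ∈ S, a i • g i = 0 := fun i hi => by
    have hfi := hf.zsmul_eq_zero_of_mem hjS hg hg' ha hi
    have hfji : a i • f (j i) = 0 := addOrderOf_dvd_iff_zsmul_eq_zero.1 <|
      (Int.natCast_dvd_natCast.2 (hord i hi)).trans (addOrderOf_dvd_iff_zsmul_eq_zero.2 hfi)
    rw [hg i hi, smul_sub, hfi, hfji, sub_zero]
  intro i
  by_cases hi : i ∈ S
  · exact hS i hi
  · exact hf.zsmul_eq_zero_of_notMem hg' ha hS hi

end IndepFamily

theorem closure_range_eq_of_mapsTo_compl (hjS : Set.MapsTo j S Sᶜ)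
    (hg : ∀ i ∈ S, g i = f i - f (j i)) (hg' : ∀ i ∉ S, g i = f i) :
    AddSubgroup.closure (Set.range g) = AddSubgroup.closure (Set.range f) := by
  have mem_f (i : I) : f i ∈ AddSubgroup.closure (Set.range f) :=
    AddSubgroup.subset_closure ⟨i, rfl⟩
  have mem_g (i : I) : g i ∈ AddSubgroup.closure (Set.range g) :=
    AddSubgroup.subset_closure ⟨i, rfl⟩
  apply le_antisymm <;> rw [AddSubgroup.closure_le] <;> rintro _ ⟨i, rfl⟩ <;>
    by_cases hi : i ∈ S
  · exact hg i hi ▸ sub_mem (mem_f i) (mem_f (j i))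
  · exact hg' i hi ▸ mem_f i
  · have : f i = g i + g (j i) := by rw [hg i hi, hg' (j i) (hjS hi), sub_add_cancel]
    exact this ▸ add_mem (mem_g i) (mem_g (j i))
  · exact hg' i hi ▸ mem_g i

end

theorem stmt1_general {G : Type} [AddCommGroup G] {I : Type} (f : I → G)
    (H : AddSubgroup G)
    (hindep : IndepFamily f)
    (hgen : AddSubgroup.closure (Set.range f) = H)
    (J : Set I)
    (I' : Set I) (hI'J : Disjoint I' J)
    (j : I → I)
    (hj : ∀ i ∈ I', j i ∈ J ∧ addOrderOf (f (j i)) = addOrderOf (f i))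
    (f1 : I → G)
    (hf1 : ∀ i ∈ I', f1 i = f i - f (j i))
    (hf1' : ∀ i ∉ I', f1 i = f i) :
    IndepFamily f1 ∧ AddSubgroup.closure (Set.range f1) = H := by
  have hjI' : Set.MapsTo j I' I'ᶜ := fun i hi hji => Set.disjoint_left.1 hI'J hji (hj i hi).1
  exact ⟨hindep.sub_of_mapsTo_compl hjI' (fun i hi => (hj i hi).2.dvd) hf1 hf1',
    hgen ▸ closure_range_eq_of_mapsTo_compl hjI' hf1 hf1'⟩

/-- Let `H = ⊕_{i∈I} ⟨f_i⟩` (i.e. the `f_i` are independent and generate `H`),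
`J ⊆ I` nonempty, `I' ⊆ I \ J`, and for each `i ∈ I'` an index `j i ∈ J` with
`o(f_{j i}) = o(f_i)`.  Setting `f¹_i = f_i - f_{j i}` for `i ∈ I'` and
`f¹_i = f_i` otherwise, the family `(f¹_i)` is independent and generates `H`. -/
theorem stmt1 {G : Type} [AddCommGroup G] {I : Type} (f : I → G)
    (H : AddSubgroup G)
    (hindep : IndepFamily f)
    (hgen : AddSubgroup.closure (Set.range f) = H)
    (J : Set I) (hJ : J.Nonempty)
    (I' : Set I) (hI'J : Disjoint I' J)
    (j : I → I)
    (hj : ∀ i ∈ I', j i ∈ J ∧ addOrderOf (f (j i)) = addOrderOf (f i))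
    (f1 : I → G)
    (hf1 : ∀ i ∈ I', f1 i = f i - f (j i))
    (hf1' : ∀ i ∉ I', f1 i = f i) :
    IndepFamily f1 ∧ AddSubgroup.closure (Set.range f1) = H :=
  stmt1_general f H hindep hgen J I' hI'J j hj f1 hf1 hf1'
end

section
/- Let G be an abelian p-group of the form G = ⟨A⟩ + H, where H is a subgroup of finite exponent and A = {e_i : i ∈ ℕ} is an independent family in G with o(e_i) ≥ exp H for every i. Then ⟨A⟩ is a pure subgroup of G, i.e., p^l⟨A⟩ = ⟨A⟩ ∩ p^l G for every natural number l. -/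
theorem AddSubgroup.map_eq_inf_map_top_of_sup_eq_top {G : Type*} [AddCommGroup G]
    {f : G →+ G} {A H : AddSubgroup G} (hA : A.map f ≤ A) (hsum : A ⊔ H = ⊤)
    (hH : A ⊓ H.map f ≤ A.map f) : A.map f = A ⊓ (⊤ : AddSubgroup G).map f := by
  rw [← hsum, AddSubgroup.map_sup, sup_comm (A.map f), ← inf_sup_assoc_of_le _ hA,
    sup_eq_right.mpr hH]

theorem dvd_of_le_of_dvd_prime_pow {p a b m n : ℕ} (hp : p.Prime) (ha : a ∣ p ^ m)
    (hb : b ∣ p ^ n) (hab : a ≤ b) : a ∣ b := by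
  obtain ⟨i, -, rfl⟩ := (Nat.dvd_prime_pow hp).mp ha
  obtain ⟨j, -, rfl⟩ := (Nat.dvd_prime_pow hp).mp hb
  exact Nat.pow_dvd_pow p ((Nat.pow_le_pow_iff_right hp.one_lt).mp hab)

theorem IndepFamily.exists_nsmul_eq_of_nsmul_eq_zero {G I : Type} [AddCommGroup G] {e : I → G}
    (he : IndepFamily e) {a b : ℕ} (ha : a ≠ 0) (hord : ∀ i, a * b ∣ addOrderOf (e i))
    {x : G} (hx : x ∈ AddSubgroup.closure (Set.range e)) (hax : a • x = 0) :
    ∃ y ∈ AddSubgroup.closure (Set.range e), b • y = x := by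
  rw [← Submodule.span_int_eq_addSubgroupClosure] at hx
  obtain ⟨c, rfl⟩ := Finsupp.mem_span_range_iff_exists_finsupp.mp hx
  have hdvd : ∀ i, (b : ℤ) ∣ c i := by
    intro i
    have hrel : ((a : ℤ) • c).sum (fun i n => n • e i) = 0 := by
      rw [Finsupp.sum_smul_index' (fun i => zero_smul ℤ (e i)), ← hax, Finsupp.smul_sum]
      exact Finsupp.sum_congr fun i _ => by rw [smul_eq_mul, mul_smul, natCast_zsmul]
    have hi : (addOrderOf (e i) : ℤ) ∣ a * c i := by
      simpa [addOrderOf_dvd_iff_zsmul_eq_zero] using he _ hrel i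
    have hab : ((a * b : ℕ) : ℤ) ∣ a * c i := (Int.natCast_dvd_natCast.mpr (hord i)).trans hi
    push_cast at hab
    exact (mul_dvd_mul_iff_left (Int.natCast_ne_zero.mpr ha)).mp hab
  refine ⟨(c.mapRange (· / (b : ℤ)) (by simp)).sum fun i n => n • e i, ?_, ?_⟩
  · exact AddSubgroup.sum_mem _ fun i _ =>
      AddSubgroup.zsmul_mem _ (AddSubgroup.subset_closure (Set.mem_range_self i)) _
  · rw [Finsupp.sum_mapRange_index (fun i => zero_smul ℤ (e i)), Finsupp.smul_sum]
    exact Finsupp.sum_congr fun i _ => by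
      rw [← natCast_zsmul, ← mul_smul, Int.mul_ediv_cancel' (hdvd i)]

theorem IndepFamily.pow_nsmul_mem_map_of_pow_nsmul_eq_zero {G I : Type} [AddCommGroup G]
    {e : I → G} (he : IndepFamily e) {p m l : ℕ} (hp : p ≠ 0)
    (hord : ∀ i, p ^ m ∣ addOrderOf (e i)) {h : G} (hh : p ^ m • h = 0)
    (hl : p ^ l • h ∈ AddSubgroup.closure (Set.range e)) :
    p ^ l • h ∈ (AddSubgroup.closure (Set.range e)).map (p ^ l • AddMonoidHom.id G) := by
  rcases le_or_gt m l with hml | hlm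
  · have hzero : p ^ l • h = 0 := by
      rw [← Nat.sub_add_cancel hml, pow_add, mul_smul, hh, smul_zero]
    exact hzero ▸ zero_mem _
  · have hsplit : p ^ (m - l) * p ^ l = p ^ m := by rw [← pow_add, Nat.sub_add_cancel hlm.le]
    obtain ⟨y, hy, hyh⟩ := he.exists_nsmul_eq_of_nsmul_eq_zero (pow_ne_zero _ hp)
      (hsplit ▸ hord) hl (by rw [← mul_smul, hsplit, hh])
    exact ⟨y, hy, hyh⟩

theorem AddMonoid.exists_exponent_dvd_pow {G : Type*} [AddCommMonoid G] {p : ℕ}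
    (hpgroup : ∀ g : G, ∃ n : ℕ, p ^ n • g = 0) (hexp : AddMonoid.exponent G ≠ 0) :
    ∃ n : ℕ, AddMonoid.exponent G ∣ p ^ n := by
  obtain ⟨g, hg⟩ := AddMonoid.exists_addOrderOf_eq_exponent (AddMonoid.exponent_ne_zero.mp hexp)
  exact (hpgroup g).imp fun n hn => hg ▸ addOrderOf_dvd_of_nsmul_eq_zero hn

/-- If the abelian `p`-group `G` equals `⟨A⟩ + H` with `H` of finite exponent and
`A = {e_i}` independent with `o(e_i) ≥ exp H`, then `⟨A⟩` is pure in `G`: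
`p^l ⟨A⟩ = ⟨A⟩ ∩ p^l G` for every `l`. -/
theorem stmt2 (G : Type) [AddCommGroup G] (p : ℕ) (hp : p.Prime)
    (hpgroup : ∀ g : G, ∃ n : ℕ, p ^ n • g = 0)
    (e : ℕ → G) (he : IndepFamily e)
    (H : AddSubgroup G)
    (hHexp : AddMonoid.exponent H ≠ 0)
    (horder : ∀ i, AddMonoid.exponent H ≤ addOrderOf (e i))
    (hsum : AddSubgroup.closure (Set.range e) ⊔ H = ⊤) :
    ∀ l : ℕ,
      AddSubgroup.map (p ^ l • AddMonoidHom.id G) (AddSubgroup.closure (Set.range e)) =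
        AddSubgroup.closure (Set.range e) ⊓
          AddSubgroup.map (p ^ l • AddMonoidHom.id G) (⊤ : AddSubgroup G) := by
  intro l
  obtain ⟨N, hN⟩ := AddMonoid.exists_exponent_dvd_pow
    (fun h : H => (hpgroup h).imp fun n hn => Subtype.ext (by simpa using hn)) hHexp
  obtain ⟨m, -, hm⟩ := (Nat.dvd_prime_pow hp).mp hN
  have hkill (h : G) (hh : h ∈ H) : p ^ m • h = 0 := by
    simpa [hm] using congrArg Subtype.val (AddMonoid.exponent_nsmul_eq_zero (⟨h, hh⟩ : H))
  have hord (i : ℕ) : p ^ m ∣ addOrderOf (e i) := by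
    obtain ⟨n, hn⟩ := hpgroup (e i)
    exact hm ▸ dvd_of_le_of_dvd_prime_pow hp hN (addOrderOf_dvd_of_nsmul_eq_zero hn) (horder i)
  refine AddSubgroup.map_eq_inf_map_top_of_sup_eq_top ?_ hsum ?_
  · rintro _ ⟨a, ha, rfl⟩
    exact nsmul_mem ha _
  · rintro _ ⟨hx, h, hh, rfl⟩
    exact he.pow_nsmul_mem_map_of_pow_nsmul_eq_zero hp.ne_zero hord (hkill h hh) hx
end

section
/- Let G be an abelian p-group of the form G = ⟨A⟩ + H, where H is a subgroup of finite exponent and A = {e_i : i ∈ ℕ} is an independent family with o(e_i) ≥ exp H for every i. Then ⟨A⟩ is a direct summand of G, i.e., there exists a subgroup V of G with G = ⟨A⟩ ⊕ V. -/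
open AddSubgroup

theorem exists_addOrderOf_eq_prime_pow_of_nsmul_eq_zero {G : Type*} [AddMonoid G] {p n : ℕ}
    (hp : p.Prime) {g : G} (hg : p ^ n • g = 0) : ∃ s, addOrderOf g = p ^ s :=
  let ⟨s, _, hs⟩ := (Nat.dvd_prime_pow hp).1 (addOrderOf_dvd_of_nsmul_eq_zero hg)
  ⟨s, hs⟩

theorem AddSubgroup.exists_maximal_disjoint {G : Type*} [AddGroup G] (U : AddSubgroup G) :
    ∃ V : AddSubgroup G, Maximal (Disjoint · U) V := by
  refine (zorn_le_nonempty₀ {W | Disjoint W U} ?_ ⊥ disjoint_bot_left).imp fun _ => And.right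
  intro c hc hchain W hW
  refine ⟨sSup c, disjoint_def.2 fun hx hxU => ?_, fun _ => le_sSup⟩
  obtain ⟨W', hW'c, hxW'⟩ := (mem_sSup_of_directedOn ⟨W, hW⟩ hchain.directedOn).1 hx
  exact disjoint_def.1 (hc hW'c) hxW' hxU

section MaximalDisjoint

variable {G : Type*} [AddCommGroup G] {U V : AddSubgroup G}

theorem exists_zsmul_mem_sup_notMem_of_maximal_disjoint (hV : Maximal (Disjoint · U) V) {y : G}
    (hy : y ∉ V) : ∃ n : ℤ, n • y ∈ U ⊔ V ∧ n • y ∉ V := by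
  have hnd : ¬Disjoint (V ⊔ zmultiples y) U := fun hd =>
    hy (hV.2 hd le_sup_left (mem_sup_right (mem_zmultiples y)))
  obtain ⟨x, hx, hxU, hx0⟩ : ∃ x ∈ V ⊔ zmultiples y, x ∈ U ∧ x ≠ 0 := by
    simpa [disjoint_def] using hnd
  obtain ⟨v, hv, _, ⟨n, rfl⟩, rfl⟩ := mem_sup.1 hx
  refine ⟨n, ?_, fun hn => hx0 (disjoint_def.1 hV.prop (add_mem hv hn) hxU)⟩
  rw [show n • y = (v + n • y) - v by abel]
  exact sub_mem (mem_sup_left hxU) (mem_sup_right hv)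

theorem mem_sup_of_nsmul_mem_of_maximal_disjoint {p : ℕ} (hp : p.Prime)
    (hV : Maximal (Disjoint · U) V) {y : G} {t : ℕ} (hy : addOrderOf y = p ^ t)
    (hpy : p • y ∈ V) : y ∈ U ⊔ V := by
  by_cases hyV : y ∈ V
  · exact mem_sup_right hyV
  obtain ⟨n, hnUV, hnV⟩ := exists_zsmul_mem_sup_notMem_of_maximal_disjoint hV hyV
  have hpn : ¬(p : ℤ) ∣ n := by
    rintro ⟨m, rfl⟩
    rw [mul_comm, mul_zsmul, natCast_zsmul] at hnV
    exact hnV (zsmul_mem hpy m)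
  have hcop : IsCoprime n ((addOrderOf y : ℕ) : ℤ) := by
    rw [hy, Nat.cast_pow]
    exact (((Nat.prime_iff_prime_int.mp hp).coprime_iff_not_dvd).2 hpn).symm.pow_right
  have hy_mem : y ∈ zmultiples (n • y) :=
    mem_zmultiples_zsmul_iff.2 (Int.isCoprime_iff_gcd_eq_one.1 hcop)
  exact (zmultiples_le_of_mem hnUV) hy_mem

end MaximalDisjoint

theorem IndepFamily.exists_nsmul_eq_of_nsmul_eq_zero_s3 {G I : Type} [AddCommGroup G] {e : I → G}
    (he : IndepFamily e) {n m : ℕ} (hn : n ≠ 0) (hdvd : ∀ i, n * m ∣ addOrderOf (e i))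
    {u : G} (hu : u ∈ closure (Set.range e)) (hnu : n • u = 0) :
    ∃ w ∈ closure (Set.range e), m • w = u := by
  obtain ⟨a, rfl⟩ := mem_closure_range_iff.1 hu
  have hcoef : ∀ i, (m : ℤ) ∣ a i := by
    intro i
    have hrel : ((n • a).sum fun i c => c • e i) = 0 := by
      rw [Finsupp.sum_smul_index' fun i => zero_smul ℤ (e i)]
      simpa only [smul_assoc, ← Finsupp.smul_sum] using hnu
    have hi := addOrderOf_dvd_iff_zsmul_eq_zero.2 (he _ hrel i)
    rw [Finsupp.smul_apply, nsmul_eq_mul] at hi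
    have hn' : (n : ℤ) ≠ 0 := by exact_mod_cast hn
    exact (mul_dvd_mul_iff_left hn').1 ((Int.natCast_dvd_natCast.2 (hdvd i)).trans hi)
  refine ⟨(a.mapRange (· / (m : ℤ)) (by simp)).sum fun i c => c • e i,
    sum_mem fun i _ => zsmul_mem (subset_closure (Set.mem_range_self i)) _, ?_⟩
  rw [Finsupp.sum_mapRange_index (by simp), Finsupp.smul_sum]
  refine Finsupp.sum_congr fun i _ => ?_
  rw [← natCast_zsmul, smul_smul, Int.mul_ediv_cancel' (hcoef i)]

theorem IndepFamily.le_closure_sup_of_maximal_disjoint {G I : Type} [AddCommGroup G] {p : ℕ}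
    (hp : p.Prime) (hpgroup : ∀ g : G, ∃ n : ℕ, p ^ n • g = 0) {e : I → G}
    (he : IndepFamily e) {k : ℕ} (hk : ∀ i, p ^ k ∣ addOrderOf (e i)) {V : AddSubgroup G}
    (hV : Maximal (Disjoint · (closure (Set.range e))) V) {H : AddSubgroup G}
    (hH : ∀ h ∈ H, p ^ k • h = 0) : H ≤ closure (Set.range e) ⊔ V := by
  set U := closure (Set.range e)
  obtain _ | k := k
  · intro h hh
    rw [show h = 0 by simpa using hH h hh]
    exact zero_mem _
  suffices ∀ j, ∀ h ∈ H, p ^ j • h = 0 → h ∈ U ⊔ V from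
    fun h hh => this (k + 1) h hh (hH h hh)
  intro j
  induction j with
  | zero => simp +contextual
  | succ j ih =>
    intro h hh hj
    have hph : p • h ∈ U ⊔ V := ih _ (nsmul_mem hh p) (by rwa [smul_smul, ← pow_succ])
    obtain ⟨u, hu, v, hv, huv⟩ := mem_sup.1 hph
    have hku : p ^ k • u = 0 := by
      have hkuv : p ^ k • u + p ^ k • v = 0 := by
        rw [← smul_add, huv, smul_smul, ← pow_succ]
        exact hH h hh
      refine disjoint_def.1 hV.prop ?_ (nsmul_mem hu _)
      rw [eq_neg_of_add_eq_zero_left hkuv]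
      exact neg_mem (nsmul_mem hv _)
    obtain ⟨w, hw, rfl⟩ := he.exists_nsmul_eq_of_nsmul_eq_zero_s3 (pow_ne_zero k hp.ne_zero)
      (fun i => pow_succ p k ▸ hk i) hu hku
    obtain ⟨t, ht⟩ :=
      exists_addOrderOf_eq_prime_pow_of_nsmul_eq_zero hp (hpgroup (h - w)).choose_spec
    have hhw : h - w ∈ U ⊔ V := mem_sup_of_nsmul_mem_of_maximal_disjoint hp hV ht
      (by rwa [smul_sub, ← huv, add_sub_cancel_left])
    simpa using add_mem hhw (mem_sup_left hw)

/-- If the abelian `p`-group `G` equals `⟨A⟩ + H` with `H` of finite exponent and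
`A = {e_i}` independent with `o(e_i) ≥ exp H`, then `⟨A⟩` is a direct summand of `G`. -/
theorem stmt3 (G : Type) [AddCommGroup G] (p : ℕ) (hp : p.Prime)
    (hpgroup : ∀ g : G, ∃ n : ℕ, p ^ n • g = 0)
    (e : ℕ → G) (he : IndepFamily e)
    (H : AddSubgroup G)
    (hHexp : AddMonoid.exponent H ≠ 0)
    (horder : ∀ i, AddMonoid.exponent H ≤ addOrderOf (e i))
    (hsum : AddSubgroup.closure (Set.range e) ⊔ H = ⊤) :
    ∃ V : AddSubgroup G, IsCompl (AddSubgroup.closure (Set.range e)) V := by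
  have hord (g : G) : ∃ s, addOrderOf g = p ^ s :=
    exists_addOrderOf_eq_prime_pow_of_nsmul_eq_zero hp (hpgroup g).choose_spec
  obtain ⟨h, hhexp⟩ :=
    AddMonoid.exists_addOrderOf_eq_exponent (AddMonoid.exponent_ne_zero.1 hHexp)
  obtain ⟨k, hk⟩ := hord h
  rw [addOrderOf_coe, hhexp] at hk
  have hkill (x : G) (hx : x ∈ H) : p ^ k • x = 0 := by
    simpa [← hk] using AddMonoid.exponent_nsmul_eq_zero (⟨x, hx⟩ : H)
  have hdvd (i : ℕ) : p ^ k ∣ addOrderOf (e i) := by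
    obtain ⟨s, hs⟩ := hord (e i)
    have hle := horder i
    rw [hk, hs] at hle
    rw [hs]
    exact Nat.pow_dvd_pow p ((Nat.pow_le_pow_iff_right hp.one_lt).1 hle)
  obtain ⟨V, hV⟩ := (closure (Set.range e)).exists_maximal_disjoint
  refine ⟨V, hV.prop.symm, codisjoint_iff.2 (top_unique ?_)⟩
  rw [← hsum]
  exact sup_le le_sup_left (he.le_closure_sup_of_maximal_disjoint hp hpgroup hdvd hV hkill)
end

section
/- Let (b_n)_{n∈ℕ} be an independent sequence in an abelian group G and let H be a finite subgroup of G. Then there exists n₀ such that H ∩ ⟨b_{n₀}, b_{n₀+1}, …⟩ = {0}. -/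
open Filter

namespace AddSubgroup

variable {G : Type*} [AddCommGroup G]

theorem exists_finsupp_of_mem_closure_image {I : Type*} {f : I → G} {s : Set I} {x : G}
    (hx : x ∈ closure (f '' s)) :
    ∃ l : I →₀ ℤ, ↑l.support ⊆ s ∧ (l.sum fun i n => n • f i) = x := by
  rw [← Submodule.span_int_eq_addSubgroupClosure, Submodule.mem_toAddSubgroup,
    Finsupp.mem_span_image_iff_linearCombination] at hx
  obtain ⟨l, hls, rfl⟩ := hx
  exact ⟨l, hls, (Finsupp.linearCombination_apply ℤ l).symm⟩

theorem exists_inf_eq_bot_of_antitone {ι : Type*} [SemilatticeSup ι] [Nonempty ι]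
    (H : AddSubgroup G) [Finite H] {K : ι → AddSubgroup G} (hK : Antitone K)
    (hHK : H ⊓ ⨅ n, K n = ⊥) : ∃ n, H ⊓ K n = ⊥ := by
  have eventually_not_mem : ∀ x ∈ (H : Set G), ∀ᶠ n in atTop, x ∈ K n → x = 0 := by
    intro x hxH
    by_cases hx0 : x = 0
    · exact Eventually.of_forall fun _ _ => hx0
    have hx : x ∉ ⨅ n, K n := fun hx =>
      hx0 (mem_bot.1 (hHK ▸ mem_inf.2 ⟨hxH, hx⟩))
    obtain ⟨n, hn⟩ := not_forall.1 (mt mem_iInf.2 hx)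
    filter_upwards [eventually_ge_atTop n] with m hm hxm
    exact absurd (hK hm hxm) hn
  obtain ⟨n, hn⟩ :=
    ((eventually_all_finite (Set.toFinite (H : Set G))).2 eventually_not_mem).exists
  exact ⟨n, eq_bot_iff.2 fun x hx => mem_bot.2 (hn x hx.1 hx.2)⟩

end AddSubgroup

namespace IndepFamily

variable {G : Type} [AddCommGroup G]

theorem sum_eq_zero_of_disjoint_support {I : Type} {f : I → G} (hf : IndepFamily f)
    {l₁ l₂ : I →₀ ℤ} (hdisj : Disjoint l₁.support l₂.support)
    (hsum : (l₁.sum fun i n => n • f i) = l₂.sum fun i n => n • f i) :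
    (l₁.sum fun i n => n • f i) = 0 := by
  have hrel := hf (l₁ - l₂) (by
    rw [Finsupp.sum_sub_index fun i m n => sub_smul m n (f i), hsum, sub_self])
  refine Finset.sum_eq_zero fun i hi => ?_
  simpa [Finsupp.notMem_support_iff.1 (Finset.disjoint_left.1 hdisj hi)] using hrel i

theorem iInf_closure_image_Ici_eq_bot {b : ℕ → G} (hb : IndepFamily b) :
    ⨅ n, AddSubgroup.closure (b '' Set.Ici n) = ⊥ := by
  refine eq_bot_iff.2 fun x hx => AddSubgroup.mem_bot.2 ?_
  rw [AddSubgroup.mem_iInf] at hx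
  obtain ⟨l₁, -, hl₁⟩ := AddSubgroup.exists_finsupp_of_mem_closure_image (hx 0)
  obtain ⟨l₂, hl₂, hl₂x⟩ :=
    AddSubgroup.exists_finsupp_of_mem_closure_image (hx (l₁.support.sup id + 1))
  have hdisj : Disjoint l₁.support l₂.support := Finset.disjoint_left.2 fun i hi₁ hi₂ => by
    have : i ≤ l₁.support.sup id := Finset.le_sup (f := id) hi₁
    have : l₁.support.sup id + 1 ≤ i := hl₂ hi₂
    omega
  rw [← hl₁]
  exact hb.sum_eq_zero_of_disjoint_support hdisj (hl₁.trans hl₂x.symm)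

end IndepFamily

/-- For an independent sequence `(b_n)` and a finite subgroup `H` of an abelian
group `G`, some tail `⟨b_{n₀}, b_{n₀+1}, …⟩` meets `H` trivially. -/
theorem stmt4 (G : Type) [AddCommGroup G] (b : ℕ → G) (hb : IndepFamily b)
    (H : AddSubgroup G) (hH : Finite H) :
    ∃ n₀ : ℕ, H ⊓ AddSubgroup.closure (b '' Set.Ici n₀) = ⊥ := by
  have tails_antitone : Antitone fun n => AddSubgroup.closure (b '' Set.Ici n) :=
    fun _ _ hmn => AddSubgroup.closure_mono (Set.image_mono (Set.Ici_subset_Ici.2 hmn))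
  refine H.exists_inf_eq_bot_of_antitone tails_antitone ?_
  rw [hb.iInf_closure_image_Ici_eq_bot, inf_bot_eq]
end

section
/- Let (b_n)_{n∈ℕ} be an independent sequence in an abelian group G and let h be a nonzero element of G. Then there exists n₁ such that the family {h, b_{n₁}, b_{n₁+1}, …} is independent. -/
open Finsupp Set Submodule

namespace IndepFamily

variable {G I J : Type} [AddCommGroup G] {f : I → G}

theorem comp (hf : IndepFamily f) {e : J → I} (he : Function.Injective e) :
    IndepFamily (f ∘ e) := by
  intro a ha j
  have hrel : (a.embDomain ⟨e, he⟩).sum (fun i n => n • f i) = 0 := by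
    rw [← linearCombination_apply, linearCombination_embDomain, linearCombination_apply]
    exact ha
  exact embDomain_apply_self ⟨e, he⟩ a j ▸ hf _ hrel (e j)

theorem eq_zero_of_add_eq_zero (hf : IndepFamily f) {S T : Set I} (hST : Disjoint S T) {x y : G}
    (hx : x ∈ span ℤ (f '' S)) (hy : y ∈ span ℤ (f '' T)) (hxy : x + y = 0) : x = 0 := by
  classical
  obtain ⟨c, hc, rfl⟩ := (mem_span_image_iff_linearCombination ℤ).1 hx
  obtain ⟨d, hd, rfl⟩ := (mem_span_image_iff_linearCombination ℤ).1 hy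
  have hcd := hf (c + d) (by rw [← linearCombination_apply, map_add, hxy])
  rw [linearCombination_apply]
  refine Finset.sum_eq_zero fun i hi => ?_
  have hdi : d i = 0 := notMem_support_iff.1 fun hi' =>
    hST.notMem_of_mem_left (mem_supported ℤ c |>.1 hc hi) (mem_supported ℤ d |>.1 hd hi')
  simpa only [Finsupp.coe_add, Pi.add_apply, hdi, add_zero] using hcd i

end IndepFamily

theorem exists_mem_span_image_Iio {R M : Type} [Semiring R] [AddCommMonoid M] [Module R M]
    {b : ℕ → M} {x : M} (hx : x ∈ span R (range b)) : ∃ n, x ∈ span R (b '' Iio n) := by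
  have hmono : Monotone fun n => span R (b '' Iio n) :=
    fun _ _ hnm => span_mono (image_mono (Iio_subset_Iio hnm))
  rwa [← image_univ, ← iUnion_Iio, image_iUnion, span_iUnion,
    mem_iSup_of_directed _ hmono.directed_le] at hx

theorem exists_forall_zsmul_mem_span_image_Iio {G : Type} [AddCommGroup G] (b : ℕ → G) (h : G) :
    ∃ n, ∀ m : ℤ, m • h ∈ span ℤ (range b) → m • h ∈ span ℤ (b '' Iio n) := by
  obtain ⟨d, hd⟩ :=
    IsPrincipal.principal ((span ℤ (range b)).comap (LinearMap.toSpanSingleton ℤ G h))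
  have hdh : d • h ∈ span ℤ (range b) := by
    change d ∈ (span ℤ (range b)).comap (LinearMap.toSpanSingleton ℤ G h)
    rw [hd]
    exact mem_span_singleton_self d
  obtain ⟨n, hn⟩ := exists_mem_span_image_Iio hdh
  refine ⟨n, fun m hm => ?_⟩
  change m ∈ (span ℤ (range b)).comap (LinearMap.toSpanSingleton ℤ G h) at hm
  rw [hd, mem_span_singleton] at hm
  obtain ⟨q, rfl⟩ := hm
  rw [smul_eq_mul, mul_smul]
  exact smul_mem _ q hn

theorem stmt5_general (G : Type) [AddCommGroup G] (b : ℕ → G) (hb : IndepFamily b)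
    (h : G) :
    ∃ n₁ : ℕ, IndepFamily (fun o : Option ℕ => o.elim h (fun k => b (n₁ + k))) := by
  obtain ⟨n₁, hn₁⟩ := exists_forall_zsmul_mem_span_image_Iio b h
  refine ⟨n₁, fun a ha => ?_⟩
  set y := linearCombination ℤ (b ∘ (n₁ + ·)) a.some with hy_def
  have hrel : a none • h + y = 0 := by
    rw [← ha, sum_option_index_smul, hy_def, linearCombination_apply]
    rfl
  have hy : y ∈ span ℤ (b '' range (n₁ + ·)) := by
    rw [← range_comp]
    exact range_linearCombination ℤ (v := b ∘ (n₁ + ·)) ▸ LinearMap.mem_range_self _ _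
  have hx : a none • h ∈ span ℤ (b '' Iio n₁) := by
    refine hn₁ _ ?_
    rw [eq_neg_of_add_eq_zero_left hrel]
    exact neg_mem (span_mono (image_subset_range _ _) hy)
  have hdisj : Disjoint (Iio n₁) (range (n₁ + ·)) := by
    rw [Set.disjoint_left]
    rintro i hi ⟨k, rfl⟩
    exact absurd hi (by simp)
  have hx0 := hb.eq_zero_of_add_eq_zero hdisj hx hy hrel
  rintro (_ | k)
  · exact hx0
  · refine hb.comp (add_right_injective n₁) a.some ?_ k
    rw [← linearCombination_apply, ← hy_def, ← hrel, hx0, zero_add]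

/-- For an independent sequence `(b_n)` in an abelian group `G` and a nonzero
`h ∈ G`, there is `n₁` such that the family `{h, b_{n₁}, b_{n₁+1}, …}` is independent. -/
theorem stmt5 (G : Type) [AddCommGroup G] (b : ℕ → G) (hb : IndepFamily b)
    (h : G) (hh : h ≠ 0) :
    ∃ n₁ : ℕ, IndepFamily (fun o : Option ℕ => o.elim h (fun k => b (n₁ + k))) :=
  stmt5_general G b hb h
end

section
/- Let G be an abelian group of finite exponent written as exp G = p₁^{n₁}⋯p_t^{n_t}, and let H be a nonzero subgroup with exp H = p₁^{b₁}⋯p_l^{b_l} (l ≤ t, all bᵢ ≥ 1). Suppose there exists j ∈ {1,…,l} such that G contains only finitely many independent elements g with o(g) = p_j^a for some a ≥ b_j. Set m = exp G / p_j^{n_j − b_j + 1} and let π : G → G be multiplication by m. Then π(H) ≠ 0 and π(G) is finite. -/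
/-!
Since `p ^ (n - b + 1)` kills `m • G`, that group is finite as soon as its `p`-torsion is
(induction on the exponent, via the fibres of `x ↦ p • x`). This `p`-torsion lies in
`G[p] ∩ p ^ (b - 1) • G`. If that set were infinite, one could pick elements `u` of order
`p ^ b` one at a time, each with `p ^ (b - 1) • u` outside the finite subgroup generated by the
earlier ones; in a cyclic `p`-group every nonzero subgroup contains the socle, so such a
sequence is independent, contradicting the hypothesis. Finally `v_p(m) = b - 1` while `H` has
an element of order `p ^ b`, so `m • H ≠ 0`.
-/

open Finset in
theorem exists_seq_forall_finset {α : Type*} [DecidableEq α] {P : Finset α → α → Prop}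
    (h : ∀ s, ∃ a, P s a) : ∃ f : ℕ → α, ∀ n, P ((range n).image f) (f n) := by
  choose next hnext using h
  let init : ℕ → Finset α := fun n => Nat.rec ∅ (fun _ s => insert (next s) s) n
  have hinit : ∀ n, init n = (range n).image (fun k => next (init k)) := by
    intro n
    induction n with
    | zero => rfl
    | succ n ih => rw [range_add_one, image_insert, ← ih]
  exact ⟨fun n => next (init n), fun n => hinit n ▸ hnext (init n)⟩

section IndepFamily

variable {G : Type} [AddCommGroup G]

theorem IndepFamily.comp_equiv {I J : Type} {f : I → G} (hf : IndepFamily f) (e : J ≃ I) :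
    IndepFamily (f ∘ e) := by
  intro a ha j
  have hsum : ((a.equivMapDomain e).sum fun i n => n • f i) = 0 := by
    rw [Finsupp.equivMapDomain_eq_mapDomain, Finsupp.sum_mapDomain_index_inj e.injective]
    exact ha
  simpa using hf _ hsum (e j)

theorem IndepFamily.range {I : Type} {f : I → G} (hf : IndepFamily f)
    (hinj : Function.Injective f) : IndepFamily (fun x : Set.range f => (x : G)) := by
  convert hf.comp_equiv (Equiv.ofInjective f hinj).symm
  exact (Equiv.apply_ofInjective_symm hinj _).symm

open Finset AddSubgroup in
theorem indepFamily_of_zsmul_mem_closure {y : ℕ → G}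
    (h : ∀ j (c : ℤ), c • y j ∈ closure (y '' Set.Iio j) → c • y j = 0) :
    IndepFamily y := by
  classical
  have key (s : Finset ℕ) (c : ℕ → ℤ) :
      ∑ j ∈ s, c j • y j = 0 → ∀ j ∈ s, c j • y j = 0 := by
    induction s using Finset.induction_on_max with
    | empty => simp
    | insert M s hlt ih =>
      intro hsum
      rw [sum_insert fun hM => lt_irrefl _ (hlt M hM)] at hsum
      have hM : c M • y M = 0 := h M (c M) <| by
        rw [eq_neg_of_add_eq_zero_left hsum]
        exact neg_mem (sum_mem fun j hj =>
          zsmul_mem (subset_closure (Set.mem_image_of_mem y (Set.mem_Iio.2 (hlt j hj)))) _)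
      rw [hM, zero_add] at hsum
      simpa [hM] using ih hsum
  intro a ha j
  by_cases hj : j ∈ a.support
  · exact key a.support a ha j hj
  · rw [Finsupp.notMem_support_iff.1 hj, zero_smul]

end IndepFamily

section PTorsion

variable {G : Type} [AddCommGroup G] {p : ℕ}

open AddSubgroup in
theorem zsmul_eq_zero_of_zsmul_mem (hp : p.Prime) {k : ℕ} {u : G}
    (hu : addOrderOf u = p ^ (k + 1)) {K : AddSubgroup G} (hK : p ^ k • u ∉ K) {c : ℤ}
    (hc : c • u ∈ K) : c • u = 0 := by
  have hpu : ((p ^ (k + 1) : ℕ) : ℤ) • u = 0 := by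
    rw [natCast_zsmul, ← hu, addOrderOf_nsmul_eq_zero]
  have hgcd : (c.gcd (p ^ (k + 1) : ℕ) : ℤ) • u ∈ K := by
    rw [Int.gcd_eq_gcd_ab, add_smul, mul_comm, mul_smul, mul_comm, mul_smul, hpu, smul_zero,
      add_zero]
    exact zsmul_mem hc _
  obtain ⟨i, hik, hi⟩ :=
    (Nat.dvd_prime_pow hp).1 (Int.natCast_dvd_natCast.1 (Int.gcd_dvd_right c _))
  rcases hik.lt_or_eq with hik | rfl
  · refine absurd ?_ hK
    rw [hi, natCast_zsmul] at hgcd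
    rw [show p ^ k = p ^ (k - i) * p ^ i by rw [← pow_add]; congr 1; omega, mul_smul]
    exact nsmul_mem hgcd _
  · apply addOrderOf_dvd_iff_zsmul_eq_zero.1
    rw [hu, ← hi]
    exact Int.gcd_dvd_left _ _

theorem IsAddTorsion.closure_finite (htor : IsAddTorsion G) {s : Set G} (hs : s.Finite) :
    (AddSubgroup.closure s : Set G).Finite := by
  have := hs.to_subtype
  have := AddCommGroup.finite_of_fg_isAddTorsion _ (htor.addSubgroup (AddSubgroup.closure s))
  exact Set.toFinite _

theorem AddSubgroup.finite_of_pow_nsmul_eq_zero_of_finite_pTorsion {e : ℕ}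
    {K : AddSubgroup G} (hK : ∀ x ∈ K, p ^ e • x = 0)
    (hsoc : {x ∈ K | p • x = 0}.Finite) : (K : Set G).Finite := by
  induction e generalizing K with
  | zero => exact (Set.finite_singleton 0).subset fun x hx => by simpa using hK x hx
  | succ e ih =>
    refine Set.Finite.of_finite_fibers (p • ·) ?_ ?_
    · refine coe_map (nsmulAddMonoidHom p) K ▸ ih ?_ (hsoc.subset ?_)
      · rintro _ ⟨x, hx, rfl⟩
        simpa [smul_smul, ← pow_succ] using hK x hx
      · rintro _ ⟨⟨x, hx, rfl⟩, hpx⟩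
        exact ⟨K.nsmul_mem hx p, hpx⟩
    · rintro _ ⟨x₀, hx₀, rfl⟩
      refine (hsoc.image (· + x₀)).subset ?_
      rintro x ⟨hx, hpx⟩
      refine ⟨x - x₀, ⟨K.sub_mem hx hx₀, ?_⟩, sub_add_cancel x x₀⟩
      simpa [smul_sub, sub_eq_zero] using hpx

open AddSubgroup in
theorem exists_infinite_indepFamily_of_infinite (hp : p.Prime) (htor : IsAddTorsion G) (k : ℕ)
    (hT : ({x : G | p • x = 0} ∩ Set.range (p ^ k • ·)).Infinite) :
    ∃ s : Set G, s.Infinite ∧ (∀ g ∈ s, addOrderOf g = p ^ (k + 1)) ∧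
      IndepFamily (fun x : s => (x : G)) := by
  classical
  have step (F : Finset G) :
      ∃ u : G, addOrderOf u = p ^ (k + 1) ∧ p ^ k • u ∉ closure (F : Set G) := by
    obtain ⟨_, ⟨hpx, u, rfl⟩, hxF⟩ :=
      (hT.sdiff (htor.closure_finite F.finite_toSet)).nonempty
    change p ^ k • u ∉ closure (F : Set G) at hxF
    have := Fact.mk hp
    refine ⟨u, addOrderOf_eq_prime_pow (fun h0 => hxF (h0 ▸ zero_mem _)) ?_, hxF⟩
    rwa [pow_succ', mul_smul]
  obtain ⟨y, hy⟩ := exists_seq_forall_finset step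
  have hy' (j : ℕ) : p ^ k • y j ∉ closure (y '' Set.Iio j) := by
    simpa using (hy j).2
  have hmem {i j : ℕ} (h : i < j) : y i ∈ closure (y '' Set.Iio j) :=
    subset_closure (Set.mem_image_of_mem y h)
  have hinj : Function.Injective y := by
    intro i j hij
    by_contra hne
    rcases lt_or_gt_of_ne hne with h | h
    · exact hy' j (hij ▸ nsmul_mem (hmem h) _)
    · exact hy' i (hij ▸ nsmul_mem (hmem h) _)
  refine ⟨Set.range y, Set.infinite_range_of_injective hinj,
    Set.forall_mem_range.2 fun j => (hy j).1, IndepFamily.range ?_ hinj⟩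
  exact indepFamily_of_zsmul_mem_closure fun j _ => zsmul_eq_zero_of_zsmul_mem hp (hy j).1 (hy' j)

end PTorsion

theorem stmt9_general (G : Type) [AddCommGroup G]
    (heG : AddMonoid.exponent G ≠ 0)
    (H : AddSubgroup G)
    (p : ℕ) (hp : p.Prime)
    (b n : ℕ)
    (hb : b = (AddMonoid.exponent H).factorization p) (hb1 : 1 ≤ b)
    (hn : n = (AddMonoid.exponent G).factorization p)
    (hfin : ∀ s : Set G, (∀ g ∈ s, ∃ a : ℕ, b ≤ a ∧ addOrderOf g = p ^ a) →
      IndepFamily (fun x : s => (x : G)) → s.Finite)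
    (m : ℕ) (hm : m = AddMonoid.exponent G / p ^ (n - b + 1)) :
    (∃ h ∈ H, m • h ≠ 0) ∧ (Set.range fun g : G => m • g).Finite := by
  have hHG : AddMonoid.exponent H ∣ AddMonoid.exponent G :=
    AddMonoid.exponent_dvd_of_addMonoidHom H.subtype H.subtype_injective
  have hbn : b ≤ n := hb ▸ hn ▸
    (Nat.factorization_prime_le_iff_dvd (ne_zero_of_dvd_ne_zero heG hHG) heG).2 hHG p hp
  have hdvd : p ^ (n - b + 1) ∣ AddMonoid.exponent G :=
    (Nat.pow_dvd_pow p (by omega)).trans (hn ▸ Nat.ordProj_dvd _ p)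
  have hmul : m * p ^ (n - b + 1) = AddMonoid.exponent G := hm ▸ Nat.div_mul_cancel hdvd
  have hm0 : m ≠ 0 := by rintro rfl; exact heG (by rw [← hmul, zero_mul])
  have hmp : m.factorization p = b - 1 := by
    rw [hm, Nat.factorization_div hdvd, Finsupp.tsub_apply, hp.factorization_pow,
      Finsupp.single_eq_same, ← hn]
    omega
  constructor
  · obtain ⟨h, hh⟩ := hp.exists_addOrderOf_eq_pow_padic_val_nat_add_exponent (G := H)
    refine ⟨h, h.2, fun h0 => ?_⟩
    have hpb : p ^ b ∣ m :=
      hb ▸ hh ▸ AddSubgroup.addOrderOf_coe h ▸ addOrderOf_dvd_of_nsmul_eq_zero h0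
    rw [hp.pow_dvd_iff_le_factorization hm0, hmp] at hpb
    omega
  have htor : IsAddTorsion G := ExponentExists.isAddTorsion (AddMonoid.exponent_ne_zero.1 heG)
  have hrange : (Set.range fun g : G => m • g) = (nsmulAddMonoidHom (α := G) m).range := by
    ext; simp
  rw [hrange]
  refine AddSubgroup.finite_of_pow_nsmul_eq_zero_of_finite_pTorsion (p := p) (e := n - b + 1)
    (by rintro _ ⟨g, rfl⟩; simp [smul_smul, mul_comm, hmul, AddMonoid.exponent_nsmul_eq_zero])
    ?_
  refine Set.Finite.subset (s := {x : G | p • x = 0} ∩ Set.range (p ^ (b - 1) • ·)) ?_ ?_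
  · by_contra hT
    obtain ⟨s, hs, hord, hind⟩ := exists_infinite_indepFamily_of_infinite hp htor (b - 1) hT
    refine hs (hfin s (fun g hg => ⟨b, le_rfl, ?_⟩) hind)
    rw [hord g hg, Nat.sub_add_cancel hb1]
  · rintro _ ⟨⟨g, rfl⟩, hpx⟩
    refine ⟨hpx, (m / p ^ (b - 1)) • g, ?_⟩
    simp [smul_smul, Nat.mul_div_cancel' (hmp ▸ Nat.ordProj_dvd m p)]

/-- Let `G` be abelian of finite exponent, `H ≤ G` nonzero, `p = p_j` a prime with
`b = b_j ≥ 1` the multiplicity of `p` in `exp H` and `n = n_j` its multiplicity in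
`exp G`.  If every independent subset of `{g : o(g) = p^a, a ≥ b}` is finite, then for
`m = exp G / p^(n - b + 1)` and `π : g ↦ m • g` one has `π(H) ≠ 0` and `π(G)` finite. -/
theorem stmt9 (G : Type) [AddCommGroup G]
    (heG : AddMonoid.exponent G ≠ 0)
    (H : AddSubgroup G) (hH : H ≠ ⊥)
    (p : ℕ) (hp : p.Prime)
    (b n : ℕ)
    (hb : b = (AddMonoid.exponent H).factorization p) (hb1 : 1 ≤ b)
    (hn : n = (AddMonoid.exponent G).factorization p)
    (hfin : ∀ s : Set G, (∀ g ∈ s, ∃ a : ℕ, b ≤ a ∧ addOrderOf g = p ^ a) →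
      IndepFamily (fun x : s => (x : G)) → s.Finite)
    (m : ℕ) (hm : m = AddMonoid.exponent G / p ^ (n - b + 1)) :
    (∃ h ∈ H, m • h ≠ 0) ∧ (Set.range fun g : G => m • g).Finite :=
  stmt9_general G heG H p hp b n hb hb1 hn hfin m hm
end

section
/- Let G be a subgroup of an abelian Hausdorff topological group S, and let (a_n^j)_{n∈ℕ}, for 0 ≤ j ≤ q−1, be q sequences in G such that (a_n^j) converges in S to an element b^j. If the subgroup ⟨b^0, …, b^{q−1}⟩ of S meets G trivially, then the interleaved sequence d_{nq+j} = a_n^j (n ≥ 1, 0 ≤ j ≤ q−1) is a T-sequence in G: for every k ≥ 0 and every nonzero g ∈ G there exists m such that g is not a sum l₁ d_{r₁} + ⋯ + l_s d_{r_s} with m < r₁ < ⋯ < r_s and Σ|lᵢ| ≤ k+1. -/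
/-!
Write `κ r = r mod q`, so that `d_r = a_{⌊r/q⌋}^{κ r}` once `r ≥ q`. Then `b^{κ r} - d_r → 0`, and
a sum `∑ lᵢ d_{rᵢ}` with `∑ |lᵢ| ≤ k + 1` and all `rᵢ` large differs by an arbitrarily small
amount from `∑ lᵢ b^{κ rᵢ}`, an element of the finite set `(k + 1) • {0, ±b^j}`. If such sums
equal `g` for arbitrarily large `rᵢ`, then `g` lies in the closure of this finite set, hence in
the set itself (`S` is Hausdorff), hence in `⟨b^j⟩ ∩ G = 0`.
-/

open Filter Topology Set
open scoped Pointwise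

theorem Set.Finite.nsmul {M : Type*} [AddMonoid M] {s : Set M} (hs : s.Finite) :
    ∀ n : ℕ, (n • s).Finite
  | 0 => by simpa only [zero_nsmul] using Set.finite_zero
  | n + 1 => by simpa only [succ_nsmul] using (hs.nsmul n).add hs

theorem exists_nhds_zero_nsmul_subset {M : Type*} [TopologicalSpace M] [AddMonoid M]
    [ContinuousAdd M] (n : ℕ) {U : Set M} (hU : U ∈ 𝓝 0) : ∃ V ∈ 𝓝 (0 : M), n • V ⊆ U := by
  induction n generalizing U with
  | zero =>
    refine ⟨univ, univ_mem, ?_⟩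
    simpa only [zero_nsmul, zero_subset] using mem_of_mem_nhds hU
  | succ n ih =>
    obtain ⟨W, hWo, hW0, hWU⟩ := exists_open_nhds_zero_add_subset hU
    obtain ⟨V, hV, hVW⟩ := ih (hWo.mem_nhds hW0)
    refine ⟨V ∩ W, inter_mem hV (hWo.mem_nhds hW0), ?_⟩
    calc (n + 1) • (V ∩ W) = n • (V ∩ W) + V ∩ W := succ_nsmul _ _
      _ ⊆ W + W := add_subset_add ((nsmul_subset_nsmul_left inter_subset_left).trans hVW)
          inter_subset_right
      _ ⊆ U := hWU

theorem sum_zsmul_mem_nsmul {G ι : Type*} [AddCommGroup G] {V : Set G} (h0 : (0 : G) ∈ V)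
    (hneg : ∀ x ∈ V, -x ∈ V) (t : Finset ι) (l : ι → ℤ) {x : ι → G} (hx : ∀ i ∈ t, x i ∈ V)
    {n : ℕ} (hn : ∑ i ∈ t, (l i).natAbs ≤ n) : ∑ i ∈ t, l i • x i ∈ n • V := by
  have hterm : ∀ i ∈ t, l i • x i ∈ (l i).natAbs • V := by
    intro i hi
    rcases Int.natAbs_eq (l i) with h | h
    · rw [show l i • x i = (l i).natAbs • x i by rw [← natCast_zsmul, ← h]]
      exact nsmul_mem_nsmul (hx i hi)
    · rw [show l i • x i = (l i).natAbs • -x i by rw [smul_neg, ← natCast_zsmul, ← neg_smul, ← h]]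
      exact nsmul_mem_nsmul (hneg _ (hx i hi))
  refine nsmul_subset_nsmul_right h0 hn ?_
  rw [← Finset.sum_nsmul_assoc]
  exact finsetSum_mem_finsetSum t _ _ hterm

theorem eventually_sum_zsmul_mem_of_tendsto_zero {G : Type*} [AddCommGroup G]
    [TopologicalSpace G] [IsTopologicalAddGroup G] {ε : ℕ → G} (hε : Tendsto ε atTop (𝓝 0))
    (n : ℕ) {U : Set G} (hU : U ∈ 𝓝 0) :
    ∀ᶠ m in atTop, ∀ (s : ℕ) (r : Fin s → ℕ) (l : Fin s → ℤ),
      (∀ i, m < r i) → ∑ i, (l i).natAbs ≤ n → ∑ i, l i • ε (r i) ∈ U := by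
  obtain ⟨V, hV, hVU⟩ := exists_nhds_zero_nsmul_subset n hU
  have hVsymm : V ∩ -V ∈ 𝓝 0 := inter_mem hV (neg_mem_nhds_zero G hV)
  obtain ⟨N, hN⟩ := eventually_atTop.1 (hε hVsymm)
  filter_upwards [eventually_ge_atTop N] with m hm s r l hr hl
  have hsum : ∑ i, l i • ε (r i) ∈ n • (V ∩ -V) :=
    sum_zsmul_mem_nsmul (mem_of_mem_nhds hVsymm) (fun x hx => ⟨hx.2, by simpa using hx.1⟩)
      _ l (fun i _ => hN _ (hm.trans (hr i).le)) hl
  exact hVU (nsmul_subset_nsmul_left inter_subset_left hsum)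

theorem tendsto_interleave {X : Type*} [TopologicalSpace X] {q : ℕ} (hq : 0 < q)
    {f : ℕ → Fin q → X} {x : X} (hf : ∀ j, Tendsto (fun n => f n j) atTop (𝓝 x)) :
    Tendsto (fun r => f (r / q) ⟨r % q, Nat.mod_lt r hq⟩) atTop (𝓝 x) := fun _ hU =>
  ((Nat.tendsto_div_const_atTop hq.ne').eventually (eventually_all.2 fun j => hf j hU)).mono
    fun _ h => h _

theorem tendsto_sub_interleave {X : Type*} [AddCommGroup X] [TopologicalSpace X]
    [IsTopologicalAddGroup X] {q : ℕ} (hq : 0 < q) {a : ℕ → Fin q → X} {b : Fin q → X}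
    (hconv : ∀ j, Tendsto (fun n => a n j) atTop (𝓝 (b j))) {d : ℕ → X}
    (hd : ∀ n, 1 ≤ n → ∀ j : Fin q, d (n * q + j) = a n j) :
    Tendsto (fun r => b ⟨r % q, Nat.mod_lt r hq⟩ - d r) atTop (𝓝 0) := by
  refine (tendsto_interleave hq (f := fun n j => b j - a n j) fun j => ?_).congr' ?_
  · simpa using (hconv j).const_sub (b j)
  · filter_upwards [eventually_ge_atTop q] with r hr
    rw [← hd (r / q) ((Nat.one_le_div_iff hq).2 hr), Nat.div_add_mod']

theorem stmt11_general (S : Type) [AddCommGroup S] [TopologicalSpace S] [IsTopologicalAddGroup S]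
    [T2Space S]
    (G : AddSubgroup S) (q : ℕ) (hq : 1 ≤ q)
    (a : ℕ → Fin q → S)
    (b : Fin q → S)
    (hconv : ∀ j, Filter.Tendsto (fun n => a n j) Filter.atTop (nhds (b j)))
    (htriv : AddSubgroup.closure (Set.range b) ⊓ G = ⊥)
    (d : ℕ → S)
    (hd : ∀ n : ℕ, 1 ≤ n → ∀ j : Fin q, d (n * q + (j : ℕ)) = a n j) :
    ∀ k : ℕ, ∀ g ∈ G, g ≠ 0 → ∃ m : ℕ,
      ∀ (s : ℕ) (r : Fin s → ℕ) (l : Fin s → ℤ),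
        (∀ i, m < r i) → StrictMono r → (∀ i, l i ≠ 0) →
        (∑ i, (l i).natAbs) ≤ k + 1 →
        g ≠ ∑ i, l i • d (r i) := by
  intro k g hg hg0
  let κ : ℕ → Fin q := fun r => ⟨r % q, Nat.mod_lt r hq⟩
  let H := AddSubgroup.closure (range b)
  let T : Set S := insert 0 (range b ∪ -range b)
  have hT0 : (0 : S) ∈ T := mem_insert _ _
  have hTneg : ∀ x ∈ T, -x ∈ T := by
    rintro x (rfl | ⟨j, rfl⟩ | hx)
    · simpa using hT0
    · exact Or.inr (Or.inr (by simp))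
    · exact Or.inr (Or.inl hx)
  let F := (k + 1) • T ∩ H
  have hF : F.Finite :=
    (((finite_range b).union (finite_range b).neg).insert 0 |>.nsmul _).inter_of_left _
  by_contra! hrep
  have hgF : g ∈ closure F := by
    refine mem_closure_iff_nhds_zero.2 fun U hU => ?_
    obtain ⟨m, hm⟩ := (eventually_sum_zsmul_mem_of_tendsto_zero
      (tendsto_sub_interleave hq hconv hd) (k + 1) hU).exists
    obtain ⟨s, r, l, hr, -, -, hl, rfl⟩ := hrep m
    refine ⟨∑ i, l i • b (κ (r i)), ⟨?_, ?_⟩, ?_⟩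
    · exact sum_zsmul_mem_nsmul hT0 hTneg _ l (fun i _ => Or.inr (Or.inl ⟨_, rfl⟩)) hl
    · exact H.sum_mem fun i _ => H.zsmul_mem (AddSubgroup.subset_closure ⟨_, rfl⟩) _
    · simpa only [smul_sub, Finset.sum_sub_distrib] using hm s r l hr hl
  rw [hF.isClosed.closure_eq] at hgF
  exact hg0 (AddSubgroup.mem_bot.1 (htriv ▸ ⟨hgF.2, hg⟩))

/-- Let `G` be a subgroup of a Hausdorff topological abelian group `S`, and let
`(a_n^j)_n ⊆ G` (for `0 ≤ j ≤ q-1`) converge in `S` to `b^j`.  If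
`⟨b^0,…,b^{q-1}⟩ ∩ G = 0`, then the interleaved sequence `d_{nq+j} = a_n^j` satisfies
the Protasov–Zelenyuk criterion in `G`, hence is a `T`-sequence. -/
theorem stmt11 (S : Type) [AddCommGroup S] [TopologicalSpace S] [IsTopologicalAddGroup S]
    [T2Space S]
    (G : AddSubgroup S) (q : ℕ) (hq : 1 ≤ q)
    (a : ℕ → Fin q → S) (ha : ∀ n j, a n j ∈ G)
    (b : Fin q → S)
    (hconv : ∀ j, Filter.Tendsto (fun n => a n j) Filter.atTop (nhds (b j)))
    (htriv : AddSubgroup.closure (Set.range b) ⊓ G = ⊥)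
    (d : ℕ → S)
    (hd : ∀ n : ℕ, 1 ≤ n → ∀ j : Fin q, d (n * q + (j : ℕ)) = a n j) :
    ∀ k : ℕ, ∀ g ∈ G, g ≠ 0 → ∃ m : ℕ,
      ∀ (s : ℕ) (r : Fin s → ℕ) (l : Fin s → ℤ),
        (∀ i, m < r i) → StrictMono r → (∀ i, l i ≠ 0) →
        (∑ i, (l i).natAbs) ≤ k + 1 →
        g ≠ ∑ i, l i • d (r i) :=
  stmt11_general S G q hq a b hconv htriv d hd
end
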